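/- Let $n \ge 1$ and let $v_1, \dots, v_n$ be an orthonormal basis of $\mathbb{R}^n$. Fix $k, m, s \in \{1,\dots,n\}$. Then $\sum_{1 \le i \le j \le n} (1+\delta_{ij})\,\big[(v_m)_i (v_s)_j + (1-\delta_{ij})(v_m)_j (v_s)_i\big]\,\big[(v_k)_i (v_s)_j + (1-\delta_{ij})(v_k)_j (v_s)_i\big] = \delta_{km} + \delta_{ms}\delta_{sk}$, where $\delta$ denotes the Kronecker delta. -/
import Mathlib


open Finset

/-- Kronecker delta as a real number. -/
noncomputable def kdelta {α : Type*} [DecidableEq α] (a b : α) : ℝ := if a = b then 1 else 0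

theorem stmt_0 (n : ℕ) (hn : 1 ≤ n) (v : Fin n → Fin n → ℝ)
    (horth : ∀ a b : Fin n, ∑ i, v a i * v b i = kdelta a b)
    (k m s : Fin n) :
    ∑ i : Fin n, ∑ j : Fin n, (if i ≤ j then
      (1 + kdelta i j) *
        ((v m i * v s j + (1 - kdelta i j) * (v m j * v s i)) *
         (v k i * v s j + (1 - kdelta i j) * (v k j * v s i)))
      else 0)
    = kdelta k m + kdelta m s * kdelta s k := by
  set G : Fin n → Fin n → ℝ := fun i j => (if i ≤ j then
      (1 + kdelta i j) *
        ((v m i * v s j + (1 - kdelta i j) * (v m j * v s i)) *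
         (v k i * v s j + (1 - kdelta i j) * (v k j * v s i)))
      else 0) with hG
  set T : Fin n → Fin n → ℝ := fun i j =>
      (v m i * v s j + v m j * v s i) * (v k i * v s j + v k j * v s i) with hT
  have hGT : ∀ i j, G i j + G j i = T i j := by
    intro i j
    rcases lt_trichotomy i j with h | h | h
    · simp only [hG, hT, kdelta, if_pos h.le, if_neg (not_le.mpr h), if_neg h.ne,
        if_neg h.ne']
      ring
    · subst h
      simp only [hG, hT, kdelta, if_pos (le_refl i), if_pos rfl, if_true, eq_self_iff_true]
      norm_num
      ring
    · simp only [hG, hT, kdelta, if_pos h.le, if_neg (not_le.mpr h), if_neg h.ne,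
        if_neg h.ne']
      ring
  have hswap : (∑ i : Fin n, ∑ j : Fin n, G j i) = ∑ i : Fin n, ∑ j : Fin n, G i j :=
    Finset.sum_comm
  have h2 : (∑ i : Fin n, ∑ j : Fin n, G i j) + (∑ i : Fin n, ∑ j : Fin n, G i j)
      = ∑ i : Fin n, ∑ j : Fin n, T i j := by
    nth_rewrite 2 [← hswap]
    rw [← Finset.sum_add_distrib]
    refine Finset.sum_congr rfl fun i _ => ?_
    rw [← Finset.sum_add_distrib]
    exact Finset.sum_congr rfl fun j _ => hGT i j
  have hTsum : ∑ i : Fin n, ∑ j : Fin n, T i j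
      = 2 * (kdelta k m + kdelta m s * kdelta s k) := by
    have expand : ∑ i : Fin n, ∑ j : Fin n, T i j
        = (∑ i, v m i * v k i) * (∑ j, v s j * v s j)
        + (∑ i, v m i * v s i) * (∑ j, v s j * v k j)
        + (∑ i, v s i * v k i) * (∑ j, v m j * v s j)
        + (∑ i, v s i * v s i) * (∑ j, v m j * v k j) := by
      simp_rw [Finset.sum_mul_sum, ← Finset.sum_add_distrib]
      refine Finset.sum_congr rfl fun i _ => ?_
      refine Finset.sum_congr rfl fun j _ => ?_
      simp only [hT]; ring
    rw [expand]
    simp only [horth]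
    have h1 : kdelta s s = (1 : ℝ) := by simp [kdelta]
    have h2 : kdelta m k = kdelta k m := by simp [kdelta, eq_comm]
    rw [h1, h2]
    ring
  linarith [h2, hTsum]
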